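/- There exist two unicyclic graphs G_1 and G_2, each with 10 vertices, 2 leaves and girth 3, such that neither c_k(G_1) ≤ c_k(G_2) for all k nor c_k(G_2) ≤ c_k(G_1) for all k; in particular the poset of 10-vertex unicyclic graphs with 2 leaves ordered by coefficient-wise domination of Laplacian coefficients has more than one minimal element. -/

import Mathlib

/-!
Both witnesses are a triangle with two pendant paths: `unicyclicA` hangs paths of lengths 1
and 6 on the same triangle vertex, `unicyclicB` hangs paths of lengths 2 and 5 on two
different ones. Their Laplacian characteristic polynomials, obtained by interpolation at
`0, …, 10` from determinants that the kernel evaluates, give `c₂ = 167 < 168` but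
`c₈ = 418 > 414`.
-/

open SimpleGraph Matrix

open scoped Classical in
/-- The `k`-th Laplacian coefficient `c_k(G)`, defined by
`det(λI - L(G)) = ∑_{k=0}^n (-1)^k c_k(G) λ^{n-k}`. -/
noncomputable def lapCoeff {V : Type*} [Fintype V] [DecidableEq V]
    (G : SimpleGraph V) (k : ℕ) : ℤ :=
  (-1) ^ k * ((G.lapMatrix ℤ).charpoly.coeff (Fintype.card V - k))

open Polynomial

namespace Matrix

variable {R : Type*} [CommRing R]

/-- Zero entries are skipped so that the kernel evaluates this quickly on sparse matrices. -/
def cofactorDet [DecidableEq R] : (n : ℕ) → Matrix (Fin n) (Fin n) R → R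
  | 0, _ => 1
  | n + 1, M => ∑ j : Fin (n + 1), if M 0 j = 0 then 0 else
      (-1) ^ (j : ℕ) * M 0 j * cofactorDet n (M.submatrix Fin.succ j.succAbove)

theorem cofactorDet_eq_det [DecidableEq R] :
    ∀ (n : ℕ) (M : Matrix (Fin n) (Fin n) R), cofactorDet n M = M.det
  | 0, M => by simp [cofactorDet]
  | n + 1, M => by
    rw [det_succ_row_zero, cofactorDet]
    refine Finset.sum_congr rfl fun j _ => ?_
    split_ifs with h
    · simp [h]
    · rw [cofactorDet_eq_det n]

theorem charpoly_eq_of_eval_eq [IsDomain R] {m : Type*} [Fintype m] [DecidableEq m]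
    (M : Matrix m m R) {p : R[X]} (hp : p.degree ≤ Fintype.card m) (s : Finset R)
    (hs : Fintype.card m < s.card) (h : ∀ x ∈ s, M.charpoly.eval x = p.eval x) :
    M.charpoly = p := by
  refine eq_of_degree_sub_lt_of_eval_finset_eq s ?_ h
  calc (M.charpoly - p).degree ≤ max M.charpoly.degree p.degree := degree_sub_le _ _
    _ ≤ Fintype.card m := max_le (degree_le_of_natDegree_le M.charpoly_natDegree_eq_dim.le) hp
    _ < s.card := by exact_mod_cast hs

end Matrix

namespace SimpleGraph

def ofEdges {n : ℕ} (l : List (Fin n × Fin n)) : SimpleGraph (Fin n) :=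
  fromRel fun a b => (a, b) ∈ l

instance {n : ℕ} (l : List (Fin n × Fin n)) : DecidableRel (ofEdges l).Adj := fun a b =>
  inferInstanceAs (Decidable (a ≠ b ∧ ((a, b) ∈ l ∨ (b, a) ∈ l)))

theorem connected_of_forall_exists_lt_adj {n : ℕ} (G : SimpleGraph (Fin (n + 1)))
    (h : ∀ v ≠ 0, ∃ u < v, G.Adj u v) : G.Connected := by
  have hreach : ∀ v, G.Reachable 0 v := by
    intro v
    induction v using WellFoundedLT.induction with
    | _ v ih =>
      by_cases hv : v = 0
      · subst hv; rfl
      · obtain ⟨u, hu, hadj⟩ := h v hv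
        exact (ih u hu).trans hadj.reachable
  exact (connected_iff_exists_forall_reachable G).2 ⟨0, hreach⟩

theorem girth_eq_three_of_adj {V : Type*} {G : SimpleGraph V} {a b c : V}
    (hab : G.Adj a b) (hbc : G.Adj b c) (hca : G.Adj c a) : G.girth = 3 := by
  have hcyc : (Walk.cons hab (Walk.cons hbc (Walk.cons hca Walk.nil))).IsCycle := by
    rw [Walk.cons_isCycle_iff]
    simp [hab.ne, hbc.ne, hca.ne, hab.ne.symm, hca.ne.symm]
  exact le_antisymm (girth_le_length hcyc) (three_le_girth fun hG => hG _ hcyc)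

end SimpleGraph

theorem lapCoeff_eq_of_charpoly_eq {V : Type*} [Fintype V] [DecidableEq V]
    {G : SimpleGraph V} [DecidableRel G.Adj] {p : ℤ[X]} (h : (G.lapMatrix ℤ).charpoly = p)
    (k : ℕ) : lapCoeff G k = (-1) ^ k * p.coeff (Fintype.card V - k) := by
  rw [lapCoeff, ← h]
  congr!

abbrev unicyclicA : SimpleGraph (Fin 10) :=
  ofEdges [(0, 1), (1, 2), (2, 0), (0, 3), (0, 4), (4, 5), (5, 6), (6, 7), (7, 8), (8, 9)]

abbrev unicyclicB : SimpleGraph (Fin 10) :=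
  ofEdges [(0, 1), (1, 2), (2, 0), (0, 3), (3, 4), (1, 5), (5, 6), (6, 7), (7, 8), (8, 9)]

def lapA : Matrix (Fin 10) (Fin 10) ℤ :=
  !![ 4, -1, -1, -1, -1,  0,  0,  0,  0,  0;
     -1,  2, -1,  0,  0,  0,  0,  0,  0,  0;
     -1, -1,  2,  0,  0,  0,  0,  0,  0,  0;
     -1,  0,  0,  1,  0,  0,  0,  0,  0,  0;
     -1,  0,  0,  0,  2, -1,  0,  0,  0,  0;
      0,  0,  0,  0, -1,  2, -1,  0,  0,  0;
      0,  0,  0,  0,  0, -1,  2, -1,  0,  0;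
      0,  0,  0,  0,  0,  0, -1,  2, -1,  0;
      0,  0,  0,  0,  0,  0,  0, -1,  2, -1;
      0,  0,  0,  0,  0,  0,  0,  0, -1,  1]

def lapB : Matrix (Fin 10) (Fin 10) ℤ :=
  !![ 3, -1, -1, -1,  0,  0,  0,  0,  0,  0;
     -1,  3, -1,  0,  0, -1,  0,  0,  0,  0;
     -1, -1,  2,  0,  0,  0,  0,  0,  0,  0;
     -1,  0,  0,  2, -1,  0,  0,  0,  0,  0;
      0,  0,  0, -1,  1,  0,  0,  0,  0,  0;
      0, -1,  0,  0,  0,  2, -1,  0,  0,  0;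
      0,  0,  0,  0,  0, -1,  2, -1,  0,  0;
      0,  0,  0,  0,  0,  0, -1,  2, -1,  0;
      0,  0,  0,  0,  0,  0,  0, -1,  2, -1;
      0,  0,  0,  0,  0,  0,  0,  0, -1,  1]

noncomputable def charpolyA : ℤ[X] :=
  X ^ 10 - C 20 * X ^ 9 + C 167 * X ^ 8 - C 758 * X ^ 7 + C 2038 * X ^ 6 - C 3314 * X ^ 5
    + C 3188 * X ^ 4 - C 1690 * X ^ 3 + C 418 * X ^ 2 - C 30 * X

noncomputable def charpolyB : ℤ[X] :=
  X ^ 10 - C 20 * X ^ 9 + C 168 * X ^ 8 - C 770 * X ^ 7 + C 2093 * X ^ 6 - C 3432 * X ^ 5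
    + C 3301 * X ^ 4 - C 1722 * X ^ 3 + C 414 * X ^ 2 - C 30 * X

theorem unicyclicA_connected : unicyclicA.Connected :=
  connected_of_forall_exists_lt_adj _ (by decide)

theorem unicyclicB_connected : unicyclicB.Connected :=
  connected_of_forall_exists_lt_adj _ (by decide)

theorem card_edgeFinset_unicyclicA : unicyclicA.edgeFinset.card = 10 := by decide

theorem card_edgeFinset_unicyclicB : unicyclicB.edgeFinset.card = 10 := by decide

theorem card_leaves_unicyclicA : Nat.card {v : Fin 10 | unicyclicA.degree v = 1} = 2 := by
  rw [Nat.card_eq_fintype_card]; decide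

theorem card_leaves_unicyclicB : Nat.card {v : Fin 10 | unicyclicB.degree v = 1} = 2 := by
  rw [Nat.card_eq_fintype_card]; decide

theorem girth_unicyclicA : unicyclicA.girth = 3 :=
  girth_eq_three_of_adj (a := 0) (b := 1) (c := 2) (by decide) (by decide) (by decide)

theorem girth_unicyclicB : unicyclicB.girth = 3 :=
  girth_eq_three_of_adj (a := 0) (b := 1) (c := 2) (by decide) (by decide) (by decide)

theorem lapMatrix_unicyclicA : unicyclicA.lapMatrix ℤ = lapA := by
  ext i j; revert j; fin_cases i <;> decide

theorem lapMatrix_unicyclicB : unicyclicB.lapMatrix ℤ = lapB := by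
  ext i j; revert j; fin_cases i <;> decide

theorem charpoly_lapA : lapA.charpoly = charpolyA := by
  refine lapA.charpoly_eq_of_eval_eq (by rw [Fintype.card_fin]; unfold charpolyA; compute_degree!)
    {0, 1, 2, 3, 4, 5, 6, 7, 8, 9, 10} (by decide) fun x hx => ?_
  fin_cases hx <;>
    (rw [eval_charpoly, ← cofactorDet_eq_det, scalar_apply]; norm_num [charpolyA]; decide)

theorem charpoly_lapB : lapB.charpoly = charpolyB := by
  refine lapB.charpoly_eq_of_eval_eq (by rw [Fintype.card_fin]; unfold charpolyB; compute_degree!)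
    {0, 1, 2, 3, 4, 5, 6, 7, 8, 9, 10} (by decide) fun x hx => ?_
  fin_cases hx <;>
    (rw [eval_charpoly, ← cofactorDet_eq_det, scalar_apply]; norm_num [charpolyB]; decide)

theorem lapCoeff_unicyclicA_two : lapCoeff unicyclicA 2 = 167 := by
  rw [lapCoeff_eq_of_charpoly_eq (lapMatrix_unicyclicA ▸ charpoly_lapA)]
  norm_num [charpolyA, coeff_X, coeff_X_pow]

theorem lapCoeff_unicyclicB_two : lapCoeff unicyclicB 2 = 168 := by
  rw [lapCoeff_eq_of_charpoly_eq (lapMatrix_unicyclicB ▸ charpoly_lapB)]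
  norm_num [charpolyB, coeff_X, coeff_X_pow]

theorem lapCoeff_unicyclicA_eight : lapCoeff unicyclicA 8 = 418 := by
  rw [lapCoeff_eq_of_charpoly_eq (lapMatrix_unicyclicA ▸ charpoly_lapA)]
  norm_num [charpolyA, coeff_X, coeff_X_pow]

theorem lapCoeff_unicyclicB_eight : lapCoeff unicyclicB 8 = 414 := by
  rw [lapCoeff_eq_of_charpoly_eq (lapMatrix_unicyclicB ▸ charpoly_lapB)]
  norm_num [charpolyB, coeff_X, coeff_X_pow]

open scoped Classical in
/-- There exist two unicyclic graphs on `10` vertices, each with `2` leaves and girth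
`3`, that are incomparable under coefficient-wise domination of Laplacian coefficients;
in particular the poset of `10`-vertex unicyclic graphs with `2` leaves has more than
one minimal element. -/
theorem exists_incomparable_unicyclic_graphs :
    ∃ G₁ G₂ : SimpleGraph (Fin 10),
      (G₁.Connected ∧ G₁.edgeFinset.card = 10 ∧
        Nat.card {v : Fin 10 | G₁.degree v = 1} = 2 ∧ G₁.girth = 3) ∧
      (G₂.Connected ∧ G₂.edgeFinset.card = 10 ∧
        Nat.card {v : Fin 10 | G₂.degree v = 1} = 2 ∧ G₂.girth = 3) ∧
      ¬ (∀ k ≤ 10, lapCoeff G₁ k ≤ lapCoeff G₂ k) ∧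
      ¬ (∀ k ≤ 10, lapCoeff G₂ k ≤ lapCoeff G₁ k) := by
  refine ⟨unicyclicA, unicyclicB,
    ⟨unicyclicA_connected, by convert card_edgeFinset_unicyclicA,
      by convert card_leaves_unicyclicA, girth_unicyclicA⟩,
    ⟨unicyclicB_connected, by convert card_edgeFinset_unicyclicB,
      by convert card_leaves_unicyclicB, girth_unicyclicB⟩,
    fun h => ?_, fun h => ?_⟩
  · have := h 8 (by norm_num)
    rw [lapCoeff_unicyclicA_eight, lapCoeff_unicyclicB_eight] at this
    norm_num at this
  · have := h 2 (by norm_num)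
    rw [lapCoeff_unicyclicA_two, lapCoeff_unicyclicB_two] at this
    norm_num at this
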